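/- Eventwise decoupling of support discovery (Corollary): fix an event ℓ, assume event ℓ has strict overround ∑_i π ℓ i > 1 and pairwise distinct edge ratios (i ≠ j implies p ℓ i / π ℓ i ≠ p ℓ j / π ℓ j). Let U be admissible and let (c, g) be a feasible portfolio of the simultaneous multi-event problem with c > 0 maximizing ∑_x Pr(x)·U(W(x)) over all feasible portfolios. Let V be admissible and let (c₀, h) be a feasible portfolio of the single-event problem with data (p ℓ ·, π ℓ ·) with c₀ > 0 maximizing ∑_i p ℓ i · V(c₀ + h i) over all single-event feasible portfolios. Then {i : g ℓ i > 0} = {i : h i > 0}; i.e., the exact active support of event ℓ in the simultaneous problem equals the single-event support, so the simultaneous support is the eventwise union of the single-event supports. -/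

import Mathlib

open Finset

/-- Probability of a product state `x`. -/
def prodProb {m : ℕ} {n : Fin m → ℕ} (p : ∀ ℓ, Fin (n ℓ) → ℝ)
    (x : ∀ ℓ, Fin (n ℓ)) : ℝ :=
  ∏ ℓ, p ℓ (x ℓ)

/-- Terminal wealth of the portfolio `(c, g)` in product state `x`. -/
def wealth {m : ℕ} {n : Fin m → ℕ} (c : ℝ) (g : ∀ ℓ, Fin (n ℓ) → ℝ)
    (x : ∀ ℓ, Fin (n ℓ)) : ℝ :=
  c + ∑ ℓ, g ℓ (x ℓ)

/-- Probability of a reduced state `y` (a state of all events other than `ℓ`). -/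
def redProb {m : ℕ} {n : Fin m → ℕ} (p : ∀ ℓ, Fin (n ℓ) → ℝ) (ℓ : Fin m)
    (y : ∀ r : {r : Fin m // r ≠ ℓ}, Fin (n r.1)) : ℝ :=
  ∏ r, p r.1 (y r)

/-- Background wealth `R_ℓ(y)` from all events other than `ℓ`. -/
def background {m : ℕ} {n : Fin m → ℕ} (c : ℝ) (g : ∀ ℓ, Fin (n ℓ) → ℝ) (ℓ : Fin m)
    (y : ∀ r : {r : Fin m // r ≠ ℓ}, Fin (n r.1)) : ℝ :=
  c + ∑ r, g r.1 (y r)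

/-- Reduced expectation `E₋ℓ[h]` over reduced states of event `ℓ`. -/
def Eminus {m : ℕ} {n : Fin m → ℕ} (p : ∀ ℓ, Fin (n ℓ) → ℝ) (ℓ : Fin m)
    (h : (∀ r : {r : Fin m // r ≠ ℓ}, Fin (n r.1)) → ℝ) : ℝ :=
  ∑ y, redProb p ℓ y * h y

/-- Feasibility: nonnegative cash and wagers, unit budget, positive wealth in every state. -/
def Feasible {m : ℕ} {n : Fin m → ℕ} (π : ∀ ℓ, Fin (n ℓ) → ℝ)
    (c : ℝ) (g : ∀ ℓ, Fin (n ℓ) → ℝ) : Prop :=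
  0 ≤ c ∧ (∀ ℓ i, 0 ≤ g ℓ i) ∧ (c + ∑ ℓ, ∑ i, π ℓ i * g ℓ i = 1) ∧
    ∀ x, 0 < wealth c g x

/-- The wagers `g` are supported on the support family `A`. -/
def SupportedOn {m : ℕ} {n : Fin m → ℕ} (A : ∀ ℓ, Finset (Fin (n ℓ)))
    (g : ∀ ℓ, Fin (n ℓ) → ℝ) : Prop :=
  ∀ ℓ i, (i ∈ A ℓ → 0 < g ℓ i) ∧ (i ∉ A ℓ → g ℓ i = 0)

/-- `U` is an admissible utility with derivative `U'`. -/
def Admissible (U U' : ℝ → ℝ) : Prop :=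
  (∀ w : ℝ, 0 < w → HasDerivAt U (U' w) w) ∧ (∀ w : ℝ, 0 < w → 0 < U' w) ∧
    StrictAntiOn U' (Set.Ioi 0)

/-- Single-event feasibility for the single-event problem of one event. -/
def FeasibleSingle {k : ℕ} (π : Fin k → ℝ) (c₀ : ℝ) (h : Fin k → ℝ) : Prop :=
  0 ≤ c₀ ∧ (∀ i, 0 ≤ h i) ∧ (c₀ + ∑ i, π i * h i = 1) ∧ ∀ i, 0 < c₀ + h i

/-!
Freezing the wagers on the events other than `ℓ` turns the simultaneous problem, seen from
event `ℓ`, into a single-event problem for the reduced utility `w ↦ E₋ℓ[U(R_ℓ(y) + w)]`, which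
is again admissible. For a single-event optimum with positive cash `c₀`, the first-order
conditions along transfers between cash and one wager say `p i G'(c₀ + h i) ≤ λ π i`, with equality
on the support, where `λ = ∑ j, p j G'(c₀ + h j)` is the marginal utility of cash. Since `G'` is
strictly decreasing, the support is `{i | t < p i / π i}` for `t = λ / G'(c₀)`, and `t` solves
`∑_{i ∉ S} p i = t (1 - ∑_{i ∈ S} π i)` with `∑_{i ∈ S} π i < 1`. This equation does not involve
the utility and has at most one solution, so both problems have the same support.
-/

open Topology

section SupportThreshold

variable {k : ℕ} (p π : Fin k → ℝ)

noncomputable def edgeSupport (t : ℝ) : Finset (Fin k) := {i | t < p i / π i}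

def IsSupportThreshold (t : ℝ) : Prop :=
  ∑ i ∈ (edgeSupport p π t)ᶜ, p i = t * (1 - ∑ i ∈ edgeSupport p π t, π i) ∧
    ∑ i ∈ edgeSupport p π t, π i < 1

variable {p π} {s t : ℝ}

theorem mem_edgeSupport {i : Fin k} : i ∈ edgeSupport p π t ↔ t < p i / π i := by
  simp [edgeSupport]

theorem edgeSupport_anti (hst : s ≤ t) : edgeSupport p π t ⊆ edgeSupport p π s :=
  fun _ hi => mem_edgeSupport.2 (hst.trans_lt (mem_edgeSupport.1 hi))

theorem IsSupportThreshold.le (hπ : ∀ i, 0 < π i) (ht : IsSupportThreshold p π t)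
    (hs : IsSupportThreshold p π s) : t ≤ s := by
  by_contra! hst
  set S := edgeSupport p π t
  set T := edgeSupport p π s
  have hST : S ⊆ T := edgeSupport_anti hst.le
  have hgap : ∑ i ∈ T \ S, p i ≤ t * ∑ i ∈ T \ S, π i := by
    rw [Finset.mul_sum]
    refine Finset.sum_le_sum fun i hi => ?_
    have := mt mem_edgeSupport.2 (Finset.mem_sdiff.1 hi).2
    rw [not_lt, div_le_iff₀ (hπ i)] at this
    linarith
  have hpS : ∑ i ∈ T \ S, p i + ∑ i ∈ Tᶜ, p i = ∑ i ∈ Sᶜ, p i := by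
    rw [← Finset.sum_sdiff (Finset.compl_subset_compl.2 hST), compl_sdiff_compl]
  have hπS : t * (1 - ∑ i ∈ S, π i) = t * ∑ i ∈ T \ S, π i + t * (1 - ∑ i ∈ T, π i) := by
    rw [← Finset.sum_sdiff hST]; ring
  have : s * (1 - ∑ i ∈ T, π i) < t * (1 - ∑ i ∈ T, π i) :=
    mul_lt_mul_of_pos_right hst (by linarith [hs.2])
  linarith [ht.1, hs.1]

theorem IsSupportThreshold.unique (hπ : ∀ i, 0 < π i) (ht : IsSupportThreshold p π t)
    (hs : IsSupportThreshold p π s) : t = s :=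
  (ht.le hπ hs).antisymm (hs.le hπ ht)

end SupportThreshold

section TransferOptimality

variable {k : ℕ} (p π : Fin k → ℝ) (G : ℝ → ℝ) (c₀ : ℝ) (h : Fin k → ℝ)

/-- Moving `π i * ε` of cash into `ε` more on outcome `i`, as long as the wager stays
nonnegative and the cash positive, does not raise expected utility. -/
def IsTransferOptimal : Prop :=
  ∀ i, IsMaxOn (fun ε => ∑ j, p j * G (c₀ - π i * ε + (h + Pi.single i ε : Fin k → ℝ) j))
    (Set.Ico (-h i) (c₀ / π i)) 0

variable {p π G c₀ h} {G' : ℝ → ℝ}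

theorem IsLocalMaxOn.hasDerivAt_nonpos {f : ℝ → ℝ} {f' a : ℝ} {s : Set ℝ}
    (hmax : IsLocalMaxOn f s a) (hs : ∃ᶠ x in 𝓝[>] a, x ∈ s)
    (hf : HasDerivAt f f' a) : f' ≤ 0 := by
  simpa using hmax.hasFDerivWithinAt_nonpos hf.hasFDerivAt.hasFDerivWithinAt
    (one_mem_posTangentConeAt_iff_frequently.2 hs)

theorem hasDerivAt_transfer (hG : ∀ w, 0 < w → HasDerivAt G (G' w) w)
    (hw : ∀ j, 0 < c₀ + h j) (i : Fin k) :
    HasDerivAt (fun ε => ∑ j, p j * G (c₀ - π i * ε + (h + Pi.single i ε : Fin k → ℝ) j))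
      (p i * G' (c₀ + h i) - (∑ j, p j * G' (c₀ + h j)) * π i) 0 := by
  set d : Fin k → ℝ := fun j => (if j = i then 1 else 0) - π i with hd
  have hlin : ∀ ε j, c₀ - π i * ε + (h + Pi.single i ε : Fin k → ℝ) j = c₀ + h j + d j * ε := by
    intro ε j
    rcases eq_or_ne j i with rfl | hji
    · simp [hd]; ring
    · simp [hd, hji]; ring
  simp_rw [hlin]
  have hterm : ∀ j, HasDerivAt (fun ε => p j * G (c₀ + h j + d j * ε))
      (p j * (G' (c₀ + h j) * d j)) 0 := by
    intro j
    have hin := ((hasDerivAt_id (0 : ℝ)).const_mul (d j)).const_add (c₀ + h j)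
    have hout : HasDerivAt G (G' (c₀ + h j)) (c₀ + h j + d j * 0) := by
      simpa using hG _ (hw j)
    simpa using (hout.comp 0 hin).const_mul (p j)
  refine (HasDerivAt.fun_sum (u := Finset.univ) fun j _ => hterm j).congr_deriv ?_
  simp only [hd, mul_sub, mul_ite, mul_one, mul_zero, Finset.sum_sub_distrib, Finset.sum_ite_eq',
    Finset.mem_univ, if_true, Finset.sum_mul, mul_assoc]

theorem IsTransferOptimal.marginal_le (hopt : IsTransferOptimal p π G c₀ h)
    (hG : ∀ w, 0 < w → HasDerivAt G (G' w) w) (hπ : ∀ i, 0 < π i) (hc₀ : 0 < c₀)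
    (hh : ∀ i, 0 ≤ h i) (i : Fin k) :
    p i * G' (c₀ + h i) ≤ (∑ j, p j * G' (c₀ + h j)) * π i := by
  have hδ : 0 < c₀ / π i := div_pos hc₀ (hπ i)
  have hright : ∃ᶠ ε in 𝓝[>] 0, ε ∈ Set.Ico (-h i) (c₀ / π i) := by
    refine Filter.Eventually.frequently ?_
    filter_upwards [Ioo_mem_nhdsGT hδ] with ε hε
    exact ⟨by linarith [hh i, hε.1], hε.2⟩
  exact sub_nonpos.1 <| (hopt i).localize.hasDerivAt_nonpos hright <|
    hasDerivAt_transfer hG (fun j => by linarith [hh j]) i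

theorem IsTransferOptimal.marginal_eq (hopt : IsTransferOptimal p π G c₀ h)
    (hG : ∀ w, 0 < w → HasDerivAt G (G' w) w) (hπ : ∀ i, 0 < π i) (hc₀ : 0 < c₀)
    (hh : ∀ i, 0 ≤ h i) {i : Fin k} (hi : 0 < h i) :
    p i * G' (c₀ + h i) = (∑ j, p j * G' (c₀ + h j)) * π i := by
  have hnhds : Set.Ico (-h i) (c₀ / π i) ∈ 𝓝 0 :=
    Ico_mem_nhds (by linarith) (div_pos hc₀ (hπ i))
  exact sub_eq_zero.1 <| ((hopt i).isLocalMax hnhds).hasDerivAt_eq_zero <|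
    hasDerivAt_transfer hG (fun j => by linarith [hh j]) i

end TransferOptimality

section SupportDiscovery

variable {k : ℕ} {p π : Fin k → ℝ} {G G' : ℝ → ℝ} {c₀ : ℝ} {h : Fin k → ℝ}

theorem sum_lt_one_of_sum_compl_eq (hp : ∀ i, 0 < p i) (hover : 1 < ∑ i, π i) {t : ℝ}
    (ht : 0 < t) (S : Finset (Fin k)) (hS : ∑ i ∈ Sᶜ, p i = t * (1 - ∑ i ∈ S, π i)) :
    ∑ i ∈ S, π i < 1 := by
  rcases Sᶜ.eq_empty_or_nonempty with hSc | hSc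
  · rw [hSc, Finset.sum_empty, (Finset.compl_eq_empty_iff S).1 hSc] at hS
    nlinarith
  · have := Finset.sum_pos (fun i _ => hp i) hSc
    rw [hS] at this
    linarith [pos_of_mul_pos_right this ht.le]

theorem IsTransferOptimal.pos_iff (hopt : IsTransferOptimal p π G c₀ h) (hG : Admissible G G')
    (hp : ∀ i, 0 < p i) (hπ : ∀ i, 0 < π i) (hc₀ : 0 < c₀) (hh : ∀ i, 0 ≤ h i) (i : Fin k) :
    0 < h i ↔ (∑ j, p j * G' (c₀ + h j)) / G' c₀ < p i / π i := by
  rw [div_lt_div_iff₀ (hG.2.1 c₀ hc₀) (hπ i)]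
  constructor
  · intro hi
    have hlt : G' (c₀ + h i) < G' c₀ := hG.2.2 (Set.mem_Ioi.2 hc₀)
      (Set.mem_Ioi.2 (by linarith)) (by linarith)
    nlinarith [hopt.marginal_eq hG.1 hπ hc₀ hh hi, hp i]
  · intro hlt
    by_contra hi
    have := hopt.marginal_le hG.1 hπ hc₀ hh i
    rw [le_antisymm (not_lt.1 hi) (hh i), add_zero] at this
    linarith

theorem IsTransferOptimal.isSupportThreshold (hopt : IsTransferOptimal p π G c₀ h)
    (hG : Admissible G G') (hp : ∀ i, 0 < p i) (hπ : ∀ i, 0 < π i) (hover : 1 < ∑ i, π i)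
    (hc₀ : 0 < c₀) (hh : ∀ i, 0 ≤ h i) :
    IsSupportThreshold p π ((∑ j, p j * G' (c₀ + h j)) / G' c₀) := by
  set lam := ∑ j, p j * G' (c₀ + h j) with hlam_def
  set S := edgeSupport p π (lam / G' c₀)
  have hG'c₀ : 0 < G' c₀ := hG.2.1 c₀ hc₀
  have hmem : ∀ i, i ∈ S ↔ 0 < h i := fun i =>
    mem_edgeSupport.trans (hopt.pos_iff hG hp hπ hc₀ hh i).symm
  have hlam : lam = lam * ∑ i ∈ S, π i + G' c₀ * ∑ i ∈ Sᶜ, p i := by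
    conv_lhs => rw [hlam_def, ← Finset.sum_add_sum_compl S]
    rw [Finset.mul_sum, Finset.mul_sum]
    congr 1
    · refine Finset.sum_congr rfl fun i hi => ?_
      rw [hopt.marginal_eq hG.1 hπ hc₀ hh ((hmem i).1 hi), mul_comm]
    · refine Finset.sum_congr rfl fun i hi => ?_
      have : h i = 0 := le_antisymm (not_lt.1 (mt (hmem i).2 (Finset.mem_compl.1 hi))) (hh i)
      rw [this, add_zero, mul_comm]
  have heq : ∑ i ∈ Sᶜ, p i = lam / G' c₀ * (1 - ∑ i ∈ S, π i) := by
    field_simp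
    linarith
  have hlampos : 0 < lam := Finset.sum_pos
    (fun j _ => mul_pos (hp j) (hG.2.1 _ (by linarith [hh j])))
    (Finset.nonempty_of_sum_ne_zero (by linarith : ∑ i, π i ≠ 0))
  exact ⟨heq, sum_lt_one_of_sum_compl_eq hp hover (div_pos hlampos hG'c₀) S heq⟩

theorem IsTransferOptimal.exists_isSupportThreshold (hopt : IsTransferOptimal p π G c₀ h)
    (hG : Admissible G G') (hp : ∀ i, 0 < p i) (hπ : ∀ i, 0 < π i) (hover : 1 < ∑ i, π i)
    (hc₀ : 0 < c₀) (hh : ∀ i, 0 ≤ h i) :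
    ∃ t, IsSupportThreshold p π t ∧ ∀ i, 0 < h i ↔ t < p i / π i :=
  ⟨_, hopt.isSupportThreshold hG hp hπ hover hc₀ hh, hopt.pos_iff hG hp hπ hc₀ hh⟩

end SupportDiscovery

section Transfers

variable {k : ℕ} {π h : Fin k → ℝ} {c₀ ε : ℝ} {i : Fin k}

theorem sum_mul_add_single (π h : Fin k → ℝ) (i : Fin k) (ε : ℝ) :
    ∑ j, π j * (h + Pi.single i ε : Fin k → ℝ) j = ∑ j, π j * h j + π i * ε := by
  simp [mul_add, Finset.sum_add_distrib, Pi.single_apply]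

theorem add_single_nonneg (hh : ∀ j, 0 ≤ h j) (hε : -h i ≤ ε) (j : Fin k) :
    0 ≤ (h + Pi.single i ε : Fin k → ℝ) j := by
  rcases eq_or_ne j i with rfl | hji
  · simp; linarith
  · simpa [hji] using hh j

theorem FeasibleSingle.transfer (hf : FeasibleSingle π c₀ h) (hπ : 0 < π i)
    (hε : ε ∈ Set.Ico (-h i) (c₀ / π i)) :
    FeasibleSingle π (c₀ - π i * ε) (h + Pi.single i ε) := by
  obtain ⟨-, hh, hbudget, -⟩ := hf
  have hcash : π i * ε < c₀ := (lt_div_iff₀' hπ).1 hε.2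
  have hwager := add_single_nonneg hh hε.1
  refine ⟨by linarith, hwager, ?_, fun j => by linarith [hwager j]⟩
  rw [sum_mul_add_single]
  linarith

theorem FeasibleSingle.isTransferOptimal {p : Fin k → ℝ} {V : ℝ → ℝ}
    (hf : FeasibleSingle π c₀ h) (hπ : ∀ i, 0 < π i)
    (hopt : ∀ c₁ h₁, FeasibleSingle π c₁ h₁ →
      ∑ i, p i * V (c₁ + h₁ i) ≤ ∑ i, p i * V (c₀ + h i)) :
    IsTransferOptimal p π V c₀ h := fun i =>
  isMaxOn_iff.2 fun ε hε => by
    simpa only [mul_zero, sub_zero, Pi.single_zero, add_zero] using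
      hopt _ _ (hf.transfer (hπ i) hε)

end Transfers

section ProductStates

variable {m : ℕ} {n : Fin m → ℕ} (p : ∀ r, Fin (n r) → ℝ) (ℓ : Fin m)

theorem prodProb_eq_mul_redProb (x : ∀ r, Fin (n r)) :
    prodProb p x = p ℓ (x ℓ) * redProb p ℓ (fun r => x r) :=
  Fintype.prod_eq_mul_prod_subtype_ne _ ℓ

theorem wealth_eq_background (c : ℝ) (g : ∀ r, Fin (n r) → ℝ) (x : ∀ r, Fin (n r)) :
    wealth c g x = background (c + g ℓ (x ℓ)) g ℓ (fun r => x r) := by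
  rw [wealth, background, Fintype.sum_eq_add_sum_subtype_ne _ ℓ]
  ring

theorem background_update (w : ℝ) (g : ∀ r, Fin (n r) → ℝ) (v : Fin (n ℓ) → ℝ) :
    background w (Function.update g ℓ v) ℓ = background w g ℓ := by
  funext y
  exact congrArg (w + ·) (Finset.sum_congr rfl fun r _ => by rw [Function.update_of_ne r.2])

theorem le_background {w : ℝ} {g : ∀ r, Fin (n r) → ℝ} (hg : ∀ r i, 0 ≤ g r i)
    (y : ∀ r : {r : Fin m // r ≠ ℓ}, Fin (n r.1)) : w ≤ background w g ℓ y :=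
  le_add_of_nonneg_right (Finset.sum_nonneg fun r _ => hg r.1 (y r))

noncomputable def reducedUtility (U : ℝ → ℝ) (g : ∀ r, Fin (n r) → ℝ) (w : ℝ) : ℝ :=
  Eminus p ℓ fun y => U (background w g ℓ y)

theorem reducedUtility_update (U : ℝ → ℝ) (g : ∀ r, Fin (n r) → ℝ) (v : Fin (n ℓ) → ℝ) :
    reducedUtility p ℓ U (Function.update g ℓ v) = reducedUtility p ℓ U g := by
  funext w
  simp only [reducedUtility, background_update]

theorem sum_prodProb_mul_wealth (U : ℝ → ℝ) (c : ℝ) (g : ∀ r, Fin (n r) → ℝ) :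
    ∑ x, prodProb p x * U (wealth c g x) = ∑ i, p ℓ i * reducedUtility p ℓ U g (c + g ℓ i) := by
  simp_rw [prodProb_eq_mul_redProb p ℓ, wealth_eq_background ℓ]
  refine (Equiv.sum_comp (Equiv.piSplitAt ℓ fun r => Fin (n r))
    fun z => p ℓ z.1 * redProb p ℓ z.2 * U (background (c + g ℓ z.1) g ℓ z.2)).trans ?_
  rw [Fintype.sum_prod_type]
  refine Finset.sum_congr rfl fun i _ => ?_
  simp only [reducedUtility, Eminus, Finset.mul_sum, mul_assoc]

end ProductStates

section ReducedProblem

variable {m : ℕ} {n : Fin m → ℕ} {p π : ∀ r, Fin (n r) → ℝ} {U U' : ℝ → ℝ} {c : ℝ}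
  {g : ∀ r, Fin (n r) → ℝ}

theorem Admissible.reducedUtility [∀ r, Nonempty (Fin (n r))] (hU : Admissible U U')
    (hp : ∀ r i, 0 < p r i) (hg : ∀ r i, 0 ≤ g r i) (ℓ : Fin m) :
    Admissible (reducedUtility p ℓ U g) (reducedUtility p ℓ U' g) := by
  have hred : ∀ y, 0 < redProb p ℓ y := fun y => Finset.prod_pos fun r _ => hp r.1 (y r)
  have hpos : ∀ {w} y, 0 < w → 0 < background w g ℓ y := fun y hw =>
    hw.trans_le (le_background ℓ hg y)
  refine ⟨fun w hw => ?_, fun w hw => ?_, fun a ha b hb hab => ?_⟩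
  · exact HasDerivAt.fun_sum fun y _ =>
      ((hU.1 _ (hpos y hw)).comp_add_const _ _).const_mul (redProb p ℓ y)
  · exact Finset.sum_pos (fun y _ => mul_pos (hred y) (hU.2.1 _ (hpos y hw)))
      Finset.univ_nonempty
  · refine Finset.sum_lt_sum_of_nonempty Finset.univ_nonempty fun y _ =>
      mul_lt_mul_of_pos_left (hU.2.2 (hpos y ha) (hpos y hb) ?_) (hred y)
    simpa [background] using hab

theorem Feasible.transfer (hf : Feasible π c g) {ℓ : Fin m} {i : Fin (n ℓ)} {ε : ℝ}
    (hπ : 0 < π ℓ i) (hε : ε ∈ Set.Ico (-g ℓ i) (c / π ℓ i)) :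
    Feasible π (c - π ℓ i * ε) (Function.update g ℓ (g ℓ + Pi.single i ε)) := by
  obtain ⟨-, hg, hbudget, -⟩ := hf
  have hcash : π ℓ i * ε < c := (lt_div_iff₀' hπ).1 hε.2
  have hwager := add_single_nonneg (hg ℓ) hε.1
  refine ⟨by linarith, fun r j => ?_, ?_, fun x => ?_⟩
  · rcases eq_or_ne r ℓ with rfl | hr
    · simpa using hwager j
    · simpa [hr] using hg r j
  · have hothers : ∑ r : {r // r ≠ ℓ}, ∑ j, π r j * Function.update g ℓ (g ℓ + Pi.single i ε) r j =
        ∑ r : {r // r ≠ ℓ}, ∑ j, π r j * g r j :=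
      Finset.sum_congr rfl fun r _ => by rw [Function.update_of_ne r.2]
    rw [Fintype.sum_eq_add_sum_subtype_ne _ ℓ] at hbudget ⊢
    rw [hothers, Function.update_self, sum_mul_add_single]
    linarith
  · rw [wealth_eq_background ℓ, background_update, Function.update_self]
    exact lt_of_lt_of_le (by linarith [hwager (x ℓ)]) (le_background ℓ hg _)

theorem Feasible.isTransferOptimal (hf : Feasible π c g) (hπ : ∀ r i, 0 < π r i)
    (hopt : ∀ c₁ g₁, Feasible π c₁ g₁ →
      ∑ x, prodProb p x * U (wealth c₁ g₁ x) ≤ ∑ x, prodProb p x * U (wealth c g x))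
    (ℓ : Fin m) : IsTransferOptimal (p ℓ) (π ℓ) (reducedUtility p ℓ U g) c (g ℓ) := fun i =>
  isMaxOn_iff.2 fun ε hε => by
    have := hopt _ _ (hf.transfer (hπ ℓ i) hε)
    rw [sum_prodProb_mul_wealth p ℓ, sum_prodProb_mul_wealth p ℓ, reducedUtility_update,
      Function.update_self] at this
    simpa only [mul_zero, sub_zero, Pi.single_zero, add_zero] using this

end ReducedProblem

theorem eventwise_decoupling_general {m : ℕ} (n : Fin m → ℕ)
    (p π : ∀ ℓ, Fin (n ℓ) → ℝ)
    (hp : ∀ ℓ i, 0 < p ℓ i) (hpsum : ∀ ℓ, ∑ i, p ℓ i = 1)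
    (hπ : ∀ ℓ i, 0 < π ℓ i)
    (ℓ : Fin m)
    (hover : 1 < ∑ i, π ℓ i)
    (U Uder : ℝ → ℝ) (hU : Admissible U Uder)
    (c : ℝ) (g : ∀ r, Fin (n r) → ℝ)
    (hfeas : Feasible π c g) (hc : 0 < c)
    (hopt : ∀ c₁ : ℝ, ∀ g₁ : ∀ r, Fin (n r) → ℝ, Feasible π c₁ g₁ →
      ∑ x, prodProb p x * U (wealth c₁ g₁ x) ≤ ∑ x, prodProb p x * U (wealth c g x))
    (V Vder : ℝ → ℝ) (hV : Admissible V Vder)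
    (c₀ : ℝ) (h : Fin (n ℓ) → ℝ)
    (hfeas₀ : FeasibleSingle (π ℓ) c₀ h) (hc₀ : 0 < c₀)
    (hopt₀ : ∀ c₁ : ℝ, ∀ h₁ : Fin (n ℓ) → ℝ, FeasibleSingle (π ℓ) c₁ h₁ →
      ∑ i, p ℓ i * V (c₁ + h₁ i) ≤ ∑ i, p ℓ i * V (c₀ + h i)) :
    ∀ i : Fin (n ℓ), 0 < g ℓ i ↔ 0 < h i := by
  have : ∀ r, Nonempty (Fin (n r)) := fun r =>
    Finset.univ_nonempty_iff.1 (Finset.nonempty_of_sum_ne_zero (f := p r) (by simp [hpsum r]))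
  obtain ⟨t₁, ht₁, hg⟩ := (hfeas.isTransferOptimal hπ hopt ℓ).exists_isSupportThreshold
    (hU.reducedUtility hp hfeas.2.1 ℓ) (hp ℓ) (hπ ℓ) hover hc (hfeas.2.1 ℓ)
  obtain ⟨t₂, ht₂, hh⟩ := (hfeas₀.isTransferOptimal (hπ ℓ) hopt₀).exists_isSupportThreshold
    hV (hp ℓ) (hπ ℓ) hover hc₀ hfeas₀.2.1
  intro i
  rw [hg, hh, ht₁.unique (hπ ℓ) ht₂]

/-- eventwise decoupling of support discovery: under strict overround
and pairwise-distinct edge ratios for event `ℓ`, the active support of event `ℓ` in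
the simultaneous multi-event problem (with admissible utility `U`) equals the active
support of the single-event problem for event `ℓ` (with admissible utility `V`). -/
theorem eventwise_decoupling {m : ℕ} (n : Fin m → ℕ)
    (p π : ∀ ℓ, Fin (n ℓ) → ℝ) (hm : 1 ≤ m)
    (hp : ∀ ℓ i, 0 < p ℓ i) (hpsum : ∀ ℓ, ∑ i, p ℓ i = 1)
    (hπ : ∀ ℓ i, 0 < π ℓ i)
    (ℓ : Fin m)
    (hover : 1 < ∑ i, π ℓ i)
    (hdistinct : ∀ i j : Fin (n ℓ), i ≠ j → p ℓ i / π ℓ i ≠ p ℓ j / π ℓ j)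
    (U Uder : ℝ → ℝ) (hU : Admissible U Uder)
    (c : ℝ) (g : ∀ r, Fin (n r) → ℝ)
    (hfeas : Feasible π c g) (hc : 0 < c)
    (hopt : ∀ c₁ : ℝ, ∀ g₁ : ∀ r, Fin (n r) → ℝ, Feasible π c₁ g₁ →
      ∑ x, prodProb p x * U (wealth c₁ g₁ x) ≤ ∑ x, prodProb p x * U (wealth c g x))
    (V Vder : ℝ → ℝ) (hV : Admissible V Vder)
    (c₀ : ℝ) (h : Fin (n ℓ) → ℝ)
    (hfeas₀ : FeasibleSingle (π ℓ) c₀ h) (hc₀ : 0 < c₀)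
    (hopt₀ : ∀ c₁ : ℝ, ∀ h₁ : Fin (n ℓ) → ℝ, FeasibleSingle (π ℓ) c₁ h₁ →
      ∑ i, p ℓ i * V (c₁ + h₁ i) ≤ ∑ i, p ℓ i * V (c₀ + h i)) :
    ∀ i : Fin (n ℓ), 0 < g ℓ i ↔ 0 < h i :=
  eventwise_decoupling_general n p π hp hpsum hπ ℓ hover U Uder hU c g hfeas hc hopt V Vder hV c₀ h
    hfeas₀ hc₀ hopt₀
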